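/- (Accelerated O(1/T²) rate for the Fenchel-game dynamic with OptimisticFTL and OMD⁺) Let X ⊆ E be nonempty closed convex, let f : E → ℝ be convex and L-smooth with L > 0, and let φ : E → ℝ be differentiable and 1-strongly convex. Fix C ≥ 4 and γ with 1/(CL) ≤ γ ≤ 1/(4L). With weights α_t := t and A_t := t(t+1)/2, define iterates: x_0 ∈ X, and for t = 1, …, T set x̃_t := (1/A_t)(α_t x_{t−1} + Σ_{s=1}^{t−1} α_s x_s), y_t := ∇f(x̃_t), and let x_t ∈ X minimize x ↦ γ α_t ⟨x, y_t⟩ + V_{x_{t−1}}(x) over X. Let x* minimize f over X and suppose V_{x_0}(x*) ≤ D. Then the weighted average x̄_T := (1/A_T) Σ_{t=1}^T α_t x_t satisfies f(x̄_T) − min_{x∈X} f(x) ≤ 2CLD/T². -/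

import Mathlib

/-!
With `A_n = n(n+1)/2` and `x̄_n` the weighted average of `x_1, …, x_n`, the potential
`Φ_n = γ A_n (f x̄_n - f x*) + V_{x_n}(x*)` does not increase. Indeed
`x̄_n - x̃_n = (n / A_n) (x_n - x_{n-1})`, so the descent lemma at `x̃_n` and convexity of `f`
(applied at `x̃_n` towards `x̄_{n-1}` and `x*`) give
`A_n f x̄_n - A_{n-1} f x̄_{n-1} - n f x* ≤ n ⟪∇f x̃_n, x_n - x*⟫ + L n² / (2 A_n) ‖x_n - x_{n-1}‖²`,
and the three-point inequality of the mirror step, with `V_{x_{n-1}}(x_n) ≥ ½ ‖x_n - x_{n-1}‖²`,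
absorbs the right-hand side into `V_{x_{n-1}}(x*) - V_{x_n}(x*)` as soon as `γ L ≤ 1/2`.
Hence `γ A_T (f x̄_T - f x*) ≤ V_{x_0}(x*) ≤ D`, and `1/γ ≤ C L`.
-/

open scoped RealInnerProductSpace
open Set AffineMap

section Gradient

variable {E : Type*} [NormedAddCommGroup E] [InnerProductSpace ℝ E]

lemma HasFDerivAt.hasDerivAt_comp_lineMap {h : E → ℝ} {g p z : E} {θ : ℝ}
    (hd : HasFDerivAt h (innerSL ℝ g) (lineMap p z θ)) :
    HasDerivAt (fun θ : ℝ => h (lineMap p z θ)) ⟪g, z - p⟫ θ := by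
  have := hd.comp_hasDerivAt θ hasDerivAt_lineMap
  rw [innerSL_apply_apply] at this
  exact this

lemma ConvexOn.add_inner_le_of_hasFDerivAt {f : E → ℝ} {g p : E} (hf : ConvexOn ℝ univ f)
    (hd : HasFDerivAt f (innerSL ℝ g) p) (z : E) : f p + ⟪g, z - p⟫ ≤ f z := by
  have hline := (hf.comp_affineMap (lineMap p z)).le_slope_of_hasDerivAt (mem_univ 0)
    (mem_univ 1) zero_lt_one (HasFDerivAt.hasDerivAt_comp_lineMap (by simpa using hd))
  simp only [slope_def_field, Function.comp_apply, lineMap_apply_zero, lineMap_apply_one] at hline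
  linarith

lemma le_add_inner_add_sq_of_lipschitz_gradient {f : E → ℝ} {gf : E → E} {L : ℝ}
    (hgf : ∀ x, HasFDerivAt f (innerSL ℝ (gf x)) x)
    (hsmooth : ∀ x z, ‖gf x - gf z‖ ≤ L * ‖x - z‖) (p z : E) :
    f z ≤ f p + ⟪gf p, z - p⟫ + L / 2 * ‖z - p‖ ^ 2 := by
  set v := z - p
  have hderiv (θ : ℝ) :
      HasDerivAt (fun θ => θ * ⟪gf p, v⟫ + L / 2 * θ ^ 2 * ‖v‖ ^ 2 - f (lineMap p z θ))
      (⟪gf p, v⟫ + L * θ * ‖v‖ ^ 2 - ⟪gf (lineMap p z θ), v⟫) θ := by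
    refine ((((hasDerivAt_id' θ).mul_const ⟪gf p, v⟫).add
      (((hasDerivAt_pow 2 θ).const_mul (L / 2)).mul_const (‖v‖ ^ 2))).sub
      (hgf (lineMap p z θ)).hasDerivAt_comp_lineMap).congr_deriv ?_
    simp only [Nat.cast_ofNat, Nat.reduceSub, pow_one]
    ring
  have hmono : MonotoneOn (fun θ => θ * ⟪gf p, v⟫ + L / 2 * θ ^ 2 * ‖v‖ ^ 2 - f (lineMap p z θ))
      (Ici 0) := by
    refine monotoneOn_of_hasDerivWithinAt_nonneg (convex_Ici 0)
      (fun θ _ => (hderiv θ).continuousAt.continuousWithinAt)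
      (fun θ _ => (hderiv θ).hasDerivWithinAt) fun θ hθ => ?_
    rw [interior_Ici, mem_Ioi] at hθ
    have hdist : ‖lineMap p z θ - p‖ = θ * ‖v‖ := by
      rw [← vsub_eq_sub, lineMap_vsub_left, norm_smul, Real.norm_of_nonneg hθ.le, vsub_eq_sub]
    have hcs : ⟪gf (lineMap p z θ) - gf p, v⟫ ≤ L * θ * ‖v‖ ^ 2 := calc
      _ ≤ ‖gf (lineMap p z θ) - gf p‖ * ‖v‖ := real_inner_le_norm _ _
      _ ≤ L * ‖lineMap p z θ - p‖ * ‖v‖ := by gcongr; exact hsmooth _ _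
      _ = L * θ * ‖v‖ ^ 2 := by rw [hdist]; ring
    rw [inner_sub_left] at hcs
    linarith
  have := hmono (mem_Ici.2 le_rfl) (mem_Ici.2 zero_le_one) zero_le_one
  simp only [lineMap_apply_zero, lineMap_apply_one] at this
  linarith

def bregman (φ : E → ℝ) (gφ : E → E) (c z : E) : ℝ := φ z - ⟪gφ c, z - c⟫ - φ c

lemma StrongConvexOn.half_sq_norm_le_bregman {φ : E → ℝ} {gφ : E → E}
    (hφ : StrongConvexOn univ 1 φ) (hgφ : ∀ x, HasFDerivAt φ (innerSL ℝ (gφ x)) x) (c z : E) :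
    1 / 2 * ‖z - c‖ ^ 2 ≤ bregman φ gφ c z := by
  have hψ : HasFDerivAt (fun x ↦ φ x - 1 / 2 * ‖x‖ ^ 2) (innerSL ℝ (gφ c - c)) c := by
    refine ((hgφ c).sub ((hasStrictFDerivAt_norm_sq c).hasFDerivAt.const_mul (1 / 2))).congr_fderiv
      ?_
    ext; simp
  have := (strongConvexOn_iff_convex.1 hφ).add_inner_le_of_hasFDerivAt hψ z
  rw [inner_sub_left, ← real_inner_self_eq_norm_sq c, ← real_inner_self_eq_norm_sq z] at this
  rw [bregman, ← real_inner_self_eq_norm_sq]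
  simp only [inner_sub_left, inner_sub_right, real_inner_comm c z] at this ⊢
  linarith

lemma bregman_three_point (φ : E → ℝ) (gφ : E → E) (c w u : E) :
    bregman φ gφ c u - bregman φ gφ w u - bregman φ gφ c w = ⟪gφ w - gφ c, u - w⟫ := by
  simp only [bregman, inner_sub_left, inner_sub_right]
  ring

lemma hasFDerivAt_bregman {φ : E → ℝ} {gφ : E → E}
    (hgφ : ∀ x, HasFDerivAt φ (innerSL ℝ (gφ x)) x) (c w : E) :
    HasFDerivAt (bregman φ gφ c) (innerSL ℝ (gφ w - gφ c)) w := by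
  have hlin : HasFDerivAt (fun z => ⟪gφ c, z - c⟫) (innerSL ℝ (gφ c)) w := by
    simpa [inner_sub_right] using ((innerSL ℝ (gφ c)).hasFDerivAt (x := w)).sub_const ⟪gφ c, c⟫
  exact (((hgφ w).sub hlin).sub_const (φ c)).congr_fderiv (map_sub _ _ _).symm

lemma IsMinOn.mul_inner_le_bregman_sub {X : Set E} {φ : E → ℝ} {gφ : E → E} {η : ℝ}
    {y c w u : E}
    (hX : Convex ℝ X) (hgφ : ∀ x, HasFDerivAt φ (innerSL ℝ (gφ x)) x)
    (hmin : IsMinOn (fun v => η * ⟪v, y⟫ + bregman φ gφ c v) X w) (hw : w ∈ X) (hu : u ∈ X) :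
    η * ⟪y, w - u⟫ ≤ bregman φ gφ c u - bregman φ gφ w u - bregman φ gφ c w := by
  have hobj : HasFDerivAt (fun v => η * ⟪v, y⟫ + bregman φ gφ c v)
      (innerSL ℝ (η • y + (gφ w - gφ c))) w := by
    have hlin : HasFDerivAt (fun v => η * ⟪v, y⟫) (η • innerSL ℝ y) w := by
      have e : (fun v => η * ⟪v, y⟫) = fun v => η * innerSL ℝ y v := by
        ext; simp [real_inner_comm]
      rw [e]
      exact (innerSL ℝ y).hasFDerivAt.const_mul η
    exact (hlin.add (hasFDerivAt_bregman hgφ c w)).congr_fderiv (by simp [map_add, map_smul])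
  have hopt := hmin.localize.hasFDerivWithinAt_nonneg hobj.hasFDerivWithinAt
    (sub_mem_posTangentConeAt_of_segment_subset (hX.segment_subset hw hu))
  rw [innerSL_apply_apply, inner_add_left, real_inner_smul_left, ← bregman_three_point] at hopt
  rw [← neg_sub u w, inner_neg_right]
  linarith

lemma ConvexOn.weighted_gap_le_of_lipschitz_gradient {f : E → ℝ} {gf : E → E} {L A A' a : ℝ}
    {z c w q z' : E}
    (hf : ConvexOn ℝ univ f) (hgf : ∀ x, HasFDerivAt f (innerSL ℝ (gf x)) x)
    (hsmooth : ∀ x z, ‖gf x - gf z‖ ≤ L * ‖x - z‖)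
    (hA' : 0 ≤ A') (ha : 0 ≤ a) (hA : A = A' + a) (hApos : 0 < A)
    (hq : A • q = a • c + A' • z) (hz' : A • z' = a • w + A' • z) (u : E) :
    A * f z' - A' * f z - a * f u ≤ a * ⟪gf q, w - u⟫ + L * a ^ 2 / (2 * A) * ‖w - c‖ ^ 2 := by
  set g := gf q
  have hdiff : z' - q = (a / A) • (w - c) := by
    apply smul_right_injective E hApos.ne'
    simp only [smul_sub, smul_smul, mul_div_cancel₀ a hApos.ne', hq, hz']
    module
  have hfz' : A * f z' ≤ A * f q + a * ⟪g, w - c⟫ + L * a ^ 2 / (2 * A) * ‖w - c‖ ^ 2 := calc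
    A * f z' ≤ A * (f q + ⟪g, z' - q⟫ + L / 2 * ‖z' - q‖ ^ 2) := by
      gcongr; exact le_add_inner_add_sq_of_lipschitz_gradient hgf hsmooth q z'
    _ = A * f q + a * ⟪g, w - c⟫ + L * a ^ 2 / (2 * A) * ‖w - c‖ ^ 2 := by
      rw [hdiff, real_inner_smul_right, norm_smul, Real.norm_of_nonneg (by positivity)]
      field_simp
  have hz := hf.add_inner_le_of_hasFDerivAt (hgf q) z
  have hu := hf.add_inner_le_of_hasFDerivAt (hgf q) u
  have hinner : a * ⟪g, w - c⟫ - A' * ⟪g, z - q⟫ - a * ⟪g, u - q⟫ = a * ⟪g, w - u⟫ := by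
    simp only [← real_inner_smul_right, ← inner_sub_right]
    congr 1
    linear_combination (norm := module) hq - hA • q
  subst hA
  linarith [mul_le_mul_of_nonneg_left hz hA', mul_le_mul_of_nonneg_left hu ha]

lemma optimistic_mirror_step_le_bregman_sub {X : Set E} {f : E → ℝ} {gf : E → E} {φ : E → ℝ}
    {gφ : E → E} {L γ A A' a : ℝ} {z c w q z' u : E} (hX : Convex ℝ X) (hf : ConvexOn ℝ univ f)
    (hgf : ∀ x, HasFDerivAt f (innerSL ℝ (gf x)) x)
    (hsmooth : ∀ x z, ‖gf x - gf z‖ ≤ L * ‖x - z‖)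
    (hφ : StrongConvexOn univ 1 φ) (hgφ : ∀ x, HasFDerivAt φ (innerSL ℝ (gφ x)) x)
    (hγ : 0 ≤ γ) (hγL : γ * L * a ^ 2 ≤ A)
    (hA' : 0 ≤ A') (ha : 0 ≤ a) (hA : A = A' + a) (hApos : 0 < A)
    (hq : A • q = a • c + A' • z) (hz' : A • z' = a • w + A' • z)
    (hmin : IsMinOn (fun v => γ * a * ⟪v, gf q⟫ + bregman φ gφ c v) X w) (hw : w ∈ X)
    (hu : u ∈ X) :
    γ * (A * f z' - A' * f z - a * f u) ≤ bregman φ gφ c u - bregman φ gφ w u := by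
  have hdescent := hf.weighted_gap_le_of_lipschitz_gradient hgf hsmooth hA' ha hA hApos hq hz' u
  have hmirror := hmin.mul_inner_le_bregman_sub hX hgφ hw hu
  have hstrong := hφ.half_sq_norm_le_bregman hgφ c w
  have hcoef : γ * (L * a ^ 2 / (2 * A)) ≤ 1 / 2 := by
    rw [← mul_div_assoc, div_le_iff₀ (by positivity)]
    linarith
  calc γ * (A * f z' - A' * f z - a * f u)
      ≤ γ * (a * ⟪gf q, w - u⟫ + L * a ^ 2 / (2 * A) * ‖w - c‖ ^ 2) := by gcongr
    _ ≤ γ * a * ⟪gf q, w - u⟫ + 1 / 2 * ‖w - c‖ ^ 2 := by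
      rw [mul_add, ← mul_assoc, ← mul_assoc]
      gcongr
    _ ≤ bregman φ gφ c u - bregman φ gφ w u := by linarith

end Gradient

lemma le_of_forall_Icc_le_pred {α : Type*} [Preorder α] {Φ : ℕ → α} {T : ℕ}
    (h : ∀ n ∈ Finset.Icc 1 T, Φ n ≤ Φ (n - 1)) : Φ T ≤ Φ 0 := by
  induction T with
  | zero => exact le_rfl
  | succ T ih =>
    exact (h (T + 1) (by simp)).trans
      (ih fun n hn => h n (Finset.Icc_subset_Icc_right T.le_succ hn))

lemma div_sq_bound_of_weighted_bound {C L γ D δ T : ℝ} (hCL : 0 < C * L) (hγ : 1 / (C * L) ≤ γ)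
    (hT : 1 ≤ T) (hD : 0 ≤ D) (h : γ * (T * (T + 1) / 2 * δ) ≤ D) :
    δ ≤ 2 * C * L * D / T ^ 2 := by
  rcases le_or_gt δ 0 with hδ | hδ
  · exact hδ.trans (div_nonneg (by nlinarith) (sq_nonneg T))
  have hA : 0 < T * (T + 1) / 2 := by nlinarith
  have hweighted : T * (T + 1) / 2 * δ ≤ C * L * D := by
    have := (mul_le_mul_of_nonneg_right hγ (mul_pos hA hδ).le).trans h
    rw [one_div_mul_eq_div, div_le_iff₀ hCL] at this
    linarith
  rw [le_div_iff₀ (by nlinarith)]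
  nlinarith

noncomputable section Dynamic

variable {E : Type*} [NormedAddCommGroup E] [InnerProductSpace ℝ E]

def weightSum (x : ℕ → E) (n : ℕ) : E := ∑ s ∈ Finset.Icc 1 n, (s : ℝ) • x s

def weightedAvg (x : ℕ → E) (n : ℕ) : E := (2 / ((n : ℝ) * ((n : ℝ) + 1))) • weightSum x n

lemma weightSum_succ (x : ℕ → E) (n : ℕ) :
    weightSum x (n + 1) = ((n + 1 : ℕ) : ℝ) • x (n + 1) + weightSum x n := by
  rw [weightSum, Finset.sum_Icc_succ_top (by omega), add_comm, weightSum]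

lemma smul_weightedAvg (x : ℕ → E) (n : ℕ) :
    ((n : ℝ) * ((n : ℝ) + 1) / 2) • weightedAvg x n = weightSum x n := by
  rcases Nat.eq_zero_or_pos n with rfl | hn
  · simp [weightSum]
  · rw [weightedAvg, smul_smul, div_mul_div_comm, mul_comm, div_self (by positivity), one_smul]

def accelPotential (f φ : E → ℝ) (gφ : E → E) (γ : ℝ) (x : ℕ → E) (u : E) (n : ℕ) : ℝ :=
  γ * ((n : ℝ) * ((n : ℝ) + 1) / 2 * (f (weightedAvg x n) - f u)) + bregman φ gφ (x n) u

lemma accelPotential_le_pred {X : Set E} {f : E → ℝ} {gf : E → E} {φ : E → ℝ} {gφ : E → E}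
    {L γ : ℝ} {x : ℕ → E} {q u : E} {n : ℕ} (hX : Convex ℝ X) (hf : ConvexOn ℝ univ f)
    (hgf : ∀ x, HasFDerivAt f (innerSL ℝ (gf x)) x)
    (hsmooth : ∀ x z, ‖gf x - gf z‖ ≤ L * ‖x - z‖)
    (hφ : StrongConvexOn univ 1 φ) (hgφ : ∀ x, HasFDerivAt φ (innerSL ℝ (gφ x)) x)
    (hγ : 0 ≤ γ) (hγL : γ * L ≤ 1 / 2) (hn : 1 ≤ n)
    (hq : q = (2 / ((n : ℝ) * ((n : ℝ) + 1))) • ((n : ℝ) • x (n - 1) + weightSum x (n - 1)))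
    (hmin : IsMinOn (fun v => γ * n * ⟪v, gf q⟫ + bregman φ gφ (x (n - 1)) v) X (x n))
    (hxn : x n ∈ X) (hu : u ∈ X) :
    accelPotential f φ gφ γ x u n ≤ accelPotential f φ gφ γ x u (n - 1) := by
  obtain ⟨t, rfl⟩ := Nat.exists_eq_add_of_le' hn
  simp only [Nat.add_sub_cancel] at hq hmin ⊢
  have hA : ((t + 1 : ℕ) : ℝ) * (((t + 1 : ℕ) : ℝ) + 1) / 2
      = (t : ℝ) * ((t : ℝ) + 1) / 2 + ((t + 1 : ℕ) : ℝ) := by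
    push_cast; ring
  have hγL' : γ * L * ((t + 1 : ℕ) : ℝ) ^ 2 ≤ ((t + 1 : ℕ) : ℝ) * (((t + 1 : ℕ) : ℝ) + 1) / 2 := by
    push_cast
    nlinarith [mul_le_mul_of_nonneg_right hγL (sq_nonneg ((t : ℝ) + 1)), t.cast_nonneg (α := ℝ)]
  have hstep := optimistic_mirror_step_le_bregman_sub hX hf hgf hsmooth hφ hgφ hγ hγL'
    (by positivity) (by positivity) hA (by positivity)
    (by rw [hq, smul_smul, div_mul_div_comm, mul_comm, div_self (by positivity), one_smul,
      smul_weightedAvg])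
    (by rw [smul_weightedAvg, weightSum_succ, smul_weightedAvg]) hmin hxn hu
  unfold accelPotential
  push_cast at hstep ⊢
  linear_combination hstep

end Dynamic

theorem accelerated_rate_optimisticFTL_omd_general
    {E : Type*} [NormedAddCommGroup E] [InnerProductSpace ℝ E]
    (X : Set E) (hXconv : Convex ℝ X)
    (f : E → ℝ) (hfconv : ConvexOn ℝ Set.univ f)
    (gf : E → E) (hgf : ∀ x : E, HasFDerivAt f (innerSL ℝ (gf x)) x)
    (L : ℝ) (hL : 0 < L)
    (hsmooth : ∀ x z : E, ‖gf x - gf z‖ ≤ L * ‖x - z‖)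
    (φ : E → ℝ) (gφ : E → E) (hgφ : ∀ x : E, HasFDerivAt φ (innerSL ℝ (gφ x)) x)
    (hφsc : StrongConvexOn Set.univ 1 φ)
    (C γ : ℝ) (hC : 4 ≤ C) (hγ1 : 1/(C*L) ≤ γ) (hγ2 : γ ≤ 1/(4*L))
    (T : ℕ) (hT : 1 ≤ T)
    (x : ℕ → E)
    (xt : ℕ → E)
    -- `x̃_t := (1/A_t) (α_t x_{t-1} + Σ_{s<t} α_s x_s)` with `α_t = t`, `A_t = t(t+1)/2`
    (hxt : ∀ t ∈ Finset.Icc 1 T,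
      xt t = (2/((t:ℝ)*((t:ℝ)+1))) •
        ((t:ℝ) • x (t-1) + ∑ s ∈ Finset.Icc 1 (t-1), (s:ℝ) • x s))
    -- `x_t` minimizes `x ↦ γ α_t ⟨x, y_t⟩ + V_{x_{t-1}} (x)` over `X`, with `y_t = ∇f (x̃_t)`
    (hmin : ∀ t ∈ Finset.Icc 1 T, x t ∈ X ∧ ∀ u ∈ X,
      γ * (t:ℝ) * ⟪x t, gf (xt t)⟫
          + (φ (x t) - ⟪gφ (x (t-1)), x t - x (t-1)⟫ - φ (x (t-1)))
        ≤ γ * (t:ℝ) * ⟪u, gf (xt t)⟫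
          + (φ u - ⟪gφ (x (t-1)), u - x (t-1)⟫ - φ (x (t-1))))
    (xstar : E) (hxstar : xstar ∈ X)
    (D : ℝ) (hD : φ xstar - ⟪gφ (x 0), xstar - x 0⟫ - φ (x 0) ≤ D) :
    f ((2/((T:ℝ)*((T:ℝ)+1))) • ∑ t ∈ Finset.Icc 1 T, (t:ℝ) • x t) - f xstar
      ≤ 2*C*L*D / (T:ℝ)^2 := by
  have hCL : 0 < C * L := by positivity
  have hγ : 0 < γ := (one_div_pos.2 hCL).trans_le hγ1
  have hγL : γ * L ≤ 1 / 2 := by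
    rw [le_div_iff₀ (by positivity)] at hγ2
    linarith
  have hpotential : accelPotential f φ gφ γ x xstar T ≤ accelPotential f φ gφ γ x xstar 0 :=
    le_of_forall_Icc_le_pred fun n hn =>
      accelPotential_le_pred hXconv hfconv hgf hsmooth hφsc hgφ hγ.le hγL (Finset.mem_Icc.1 hn).1
        (hxt n hn) (isMinOn_iff.2 (hmin n hn).2) (hmin n hn).1 hxstar
  have hbregman (n : ℕ) : 0 ≤ bregman φ gφ (x n) xstar :=
    (by positivity : (0 : ℝ) ≤ 1 / 2 * ‖xstar - x n‖ ^ 2).trans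
      (hφsc.half_sq_norm_le_bregman hgφ (x n) xstar)
  have hV0 : bregman φ gφ (x 0) xstar ≤ D := hD
  simp only [accelPotential, CharP.cast_eq_zero, zero_mul, zero_div, mul_zero, zero_add]
    at hpotential
  exact div_sq_bound_of_weighted_bound hCL hγ1 (by exact_mod_cast hT) ((hbregman 0).trans hV0)
    (by linarith [hbregman T] : γ * (_ * (f (weightedAvg x T) - f xstar)) ≤ D)

/-- Accelerated `O(1/T²)` rate for the Fenchel-game dynamic with OptimisticFTL and OMD⁺.
The Bregman divergence `V_c (z) = φ z - ⟪∇φ c, z - c⟫ - φ c` is written out using the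
gradient `gφ` of `φ`, and `y_t := ∇f (x̃_t)` is written out using the gradient `gf` of `f`. -/
theorem accelerated_rate_optimisticFTL_omd
    {E : Type*} [NormedAddCommGroup E] [InnerProductSpace ℝ E]
    (X : Set E) (hXne : X.Nonempty) (hXcl : IsClosed X) (hXconv : Convex ℝ X)
    (f : E → ℝ) (hfconv : ConvexOn ℝ Set.univ f)
    (gf : E → E) (hgf : ∀ x : E, HasFDerivAt f (innerSL ℝ (gf x)) x)
    (L : ℝ) (hL : 0 < L)
    (hsmooth : ∀ x z : E, ‖gf x - gf z‖ ≤ L * ‖x - z‖)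
    (φ : E → ℝ) (gφ : E → E) (hgφ : ∀ x : E, HasFDerivAt φ (innerSL ℝ (gφ x)) x)
    (hφsc : StrongConvexOn Set.univ 1 φ)
    (C γ : ℝ) (hC : 4 ≤ C) (hγ1 : 1/(C*L) ≤ γ) (hγ2 : γ ≤ 1/(4*L))
    (T : ℕ) (hT : 1 ≤ T)
    (x : ℕ → E) (hx0 : x 0 ∈ X)
    (xt : ℕ → E)
    -- `x̃_t := (1/A_t) (α_t x_{t-1} + Σ_{s<t} α_s x_s)` with `α_t = t`, `A_t = t(t+1)/2`
    (hxt : ∀ t ∈ Finset.Icc 1 T,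
      xt t = (2/((t:ℝ)*((t:ℝ)+1))) •
        ((t:ℝ) • x (t-1) + ∑ s ∈ Finset.Icc 1 (t-1), (s:ℝ) • x s))
    -- `x_t` minimizes `x ↦ γ α_t ⟨x, y_t⟩ + V_{x_{t-1}} (x)` over `X`, with `y_t = ∇f (x̃_t)`
    (hmin : ∀ t ∈ Finset.Icc 1 T, x t ∈ X ∧ ∀ u ∈ X,
      γ * (t:ℝ) * ⟪x t, gf (xt t)⟫
          + (φ (x t) - ⟪gφ (x (t-1)), x t - x (t-1)⟫ - φ (x (t-1)))
        ≤ γ * (t:ℝ) * ⟪u, gf (xt t)⟫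
          + (φ u - ⟪gφ (x (t-1)), u - x (t-1)⟫ - φ (x (t-1))))
    (xstar : E) (hxstar : xstar ∈ X) (hxstarmin : ∀ u ∈ X, f xstar ≤ f u)
    (D : ℝ) (hD : φ xstar - ⟪gφ (x 0), xstar - x 0⟫ - φ (x 0) ≤ D) :
    f ((2/((T:ℝ)*((T:ℝ)+1))) • ∑ t ∈ Finset.Icc 1 T, (t:ℝ) • x t) - f xstar
      ≤ 2*C*L*D / (T:ℝ)^2 :=
  accelerated_rate_optimisticFTL_omd_general X hXconv f hfconv gf hgf L hL hsmooth φ gφ hgφ hφsc C γ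
    hC hγ1 hγ2 T hT x xt hxt hmin xstar hxstar D hD
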